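/- Every element of the 3-fusible numbers F₃ = F({g₃},{0}), where g₃(x,y,z) = (x+y+z+1)/3, is a rational number whose denominator in lowest terms is a power of 3; consequently 1/2 ∉ F₃, yet 1/2 is a limit point of F₃ since the numbers aₙ = (1 − 3^{-n})/2 belong to F₃ for all n ∈ ℕ and converge to 1/2. In particular, F₃ is not a closed subset of ℝ. -/

import Mathlib

/-!
The reals `a / n ^ k` form an additive group containing `1` and stable under division by `n`,
so every `n`-fusible number lies in it. For `n ≥ 3` the point `1 / (n - 1)` does not, since
`n - 1 ∤ n ^ k`, yet it is the limit of the `n`-fusible numbers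
`aₘ = (1 - n⁻ᵐ) / (n - 1)`, obtained by iterating `aₘ₊₁ = gₙ(aₘ, 0, …, 0)` from `a₀ = 0`.
-/

inductive FusibleN (n : ℕ) : ℝ → Prop
  | zero : FusibleN n 0
  | step (x : Fin n → ℝ) : (∀ j, FusibleN n (x j)) →
      (∀ j, x j < (∑ j, x j + 1) / n) → FusibleN n ((∑ j, x j + 1) / n)

open Filter Topology

def intDivPow (n : ℕ) [NeZero n] : AddSubgroup ℝ where
  carrier := {x | ∃ (a : ℤ) (k : ℕ), x = a / n ^ k}
  zero_mem' := ⟨0, 0, by simp⟩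
  add_mem' := by
    rintro _ _ ⟨a, k, rfl⟩ ⟨b, l, rfl⟩
    refine ⟨a * n ^ l + b * n ^ k, k + l, ?_⟩
    have : (n : ℝ) ≠ 0 := NeZero.ne _
    push_cast
    field_simp
    ring
  neg_mem' := by
    rintro _ ⟨a, k, rfl⟩
    exact ⟨-a, k, by push_cast; ring⟩

namespace intDivPow

variable {n : ℕ} [NeZero n] {x : ℝ}

theorem mem_iff : x ∈ intDivPow n ↔ ∃ (a : ℤ) (k : ℕ), x = a / n ^ k := Iff.rfl

theorem intCast_mem (a : ℤ) : (a : ℝ) ∈ intDivPow n := ⟨a, 0, by simp⟩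

theorem div_mem (hx : x ∈ intDivPow n) : x / n ∈ intDivPow n := by
  obtain ⟨a, k, rfl⟩ := hx
  exact ⟨a, k + 1, by rw [pow_succ, div_div]⟩

theorem one_div_sub_one_notMem (hn : 3 ≤ n) : 1 / ((n : ℝ) - 1) ∉ intDivPow n := by
  rintro ⟨a, k, h⟩
  have hpow : (n : ℤ) ^ k = (n - 1) * a := by
    have hn1 : (n : ℝ) - 1 ≠ 0 := by
      have : (3 : ℝ) ≤ n := by exact_mod_cast hn
      linarith
    have hpow_ne : (n : ℝ) ^ k ≠ 0 := pow_ne_zero _ (NeZero.ne _)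
    field_simp at h
    exact_mod_cast h
  have hcop : IsCoprime ((n : ℤ) - 1) ((n : ℤ) ^ k) :=
    IsCoprime.pow_right ⟨-1, 1, by ring⟩
  have hunit := hcop.isUnit_of_dvd' dvd_rfl (hpow ▸ dvd_mul_right _ _)
  rcases Int.isUnit_iff.mp hunit with h | h <;> omega

end intDivPow

namespace FusibleN

variable {n : ℕ}

theorem mem_intDivPow [NeZero n] {x : ℝ} (h : FusibleN n x) : x ∈ intDivPow n := by
  induction h with
  | zero => exact zero_mem _
  | step x _ _ ih =>
    have hone : (1 : ℝ) ∈ intDivPow n := by exact_mod_cast intDivPow.intCast_mem 1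
    exact intDivPow.div_mem (add_mem (sum_mem fun j _ => ih j) hone)

theorem one_sub_inv_pow_div (hn : 2 ≤ n) (m : ℕ) :
    FusibleN n ((1 - ((n : ℝ)⁻¹) ^ m) / (n - 1)) := by
  have : NeZero n := ⟨by omega⟩
  have hn' : (2 : ℝ) ≤ n := by exact_mod_cast hn
  induction m with
  | zero => simpa using FusibleN.zero
  | succ m ih =>
    set a := (1 - ((n : ℝ)⁻¹) ^ m) / (n - 1)
    have hn1 : (n : ℝ) - 1 ≠ 0 := by linarith
    have ha_mul : a * (n - 1) = 1 - ((n : ℝ)⁻¹) ^ m := div_mul_cancel₀ _ hn1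
    have hpow_pos : 0 < ((n : ℝ)⁻¹) ^ m := by positivity
    have hpow_le : ((n : ℝ)⁻¹) ^ m ≤ 1 :=
      pow_le_one₀ (by positivity) (inv_le_one_of_one_le₀ (by linarith))
    clear_value a
    have hsucc : (1 - ((n : ℝ)⁻¹) ^ (m + 1)) / (n - 1) = (a + 1) / n := by
      rw [div_eq_iff hn1, pow_succ]
      field_simp
      linear_combination -ha_mul
    have ha : a < (a + 1) / n := by
      rw [lt_div_iff₀ (by positivity)]
      linarith
    have ha0 : 0 < (a + 1) / n := by
      have : 0 ≤ a := by nlinarith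
      positivity
    have hsum : ∑ j, Pi.single (0 : Fin n) a j = a := by simp
    rw [hsucc, ← hsum]
    refine step _ (fun j => ?_) (fun j => ?_)
    · rcases eq_or_ne j 0 with rfl | hj
      · simpa using ih
      · simpa [hj] using FusibleN.zero
    · rw [hsum]
      rcases eq_or_ne j 0 with rfl | hj
      · simpa using ha
      · simpa [hj] using ha0

end FusibleN

theorem tendsto_one_sub_inv_pow_div {r : ℝ} (hr : 1 < r) :
    Tendsto (fun m : ℕ => (1 - r⁻¹ ^ m) / (r - 1)) atTop (𝓝 (1 / (r - 1))) := by
  have h0 := tendsto_pow_atTop_nhds_zero_of_lt_one (inv_nonneg.2 (by linarith))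
    (inv_lt_one_of_one_lt₀ hr)
  simpa using (tendsto_const_nhds (x := (1:ℝ))).sub h0 |>.div_const (r - 1)

theorem fusible3_not_closed :
    (∀ x : ℝ, FusibleN 3 x → ∃ (a : ℤ) (k : ℕ), x = (a : ℝ) / 3 ^ k) ∧
    ¬ FusibleN 3 (1 / 2) ∧
    (∀ m : ℕ, FusibleN 3 ((1 - ((3 : ℝ)⁻¹) ^ m) / 2)) ∧
    Filter.Tendsto (fun m : ℕ => (1 - ((3 : ℝ)⁻¹) ^ m) / 2)
      Filter.atTop (nhds (1 / 2)) ∧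
    (1 : ℝ) / 2 ∈ closure {x : ℝ | FusibleN 3 x} ∧
    ¬ IsClosed {x : ℝ | FusibleN 3 x} := by
  have hden (x : ℝ) (hx : FusibleN 3 x) : ∃ (a : ℤ) (k : ℕ), x = (a : ℝ) / 3 ^ k := by
    simpa using intDivPow.mem_iff.1 hx.mem_intDivPow
  have hhalf : ¬ FusibleN 3 (1 / 2) := fun h =>
    intDivPow.one_div_sub_one_notMem le_rfl (by norm_num; exact h.mem_intDivPow)
  have hseq (m : ℕ) : FusibleN 3 ((1 - ((3 : ℝ)⁻¹) ^ m) / 2) := by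
    convert FusibleN.one_sub_inv_pow_div (n := 3) (by norm_num) m using 2 <;> norm_num
  have hlim : Tendsto (fun m : ℕ => (1 - ((3 : ℝ)⁻¹) ^ m) / 2) atTop (𝓝 (1 / 2)) := by
    convert tendsto_one_sub_inv_pow_div (r := 3) (by norm_num) using 3 <;> norm_num
  have hclosure : (1 : ℝ) / 2 ∈ closure {x : ℝ | FusibleN 3 x} :=
    mem_closure_of_tendsto hlim (Eventually.of_forall hseq)
  exact ⟨hden, hhalf, hseq, hlim, hclosure, fun hc => hhalf (hc.closure_subset hclosure)⟩
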